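/- arXiv:2208.05601 — 6 statements merged into one kernel-verified Lean document; each statement's English description precedes it below -/
import Mathlib

section
/- Fix t ≥ 1 and m ≥ 1, and let δ ∈ 𝔽₂^m with δ = η₁ 1 η₂ 1 ⋯ 1 η_c as a decomposition into zero-runs separated by ones. For a zero-run η_j of length γ_j > 0 define α_j and β_j as the minimum numbers of fault vectors (basis vectors e_i or adjacent sums e_i + e_{i+1}) needed to produce the substrings of δ before and after the block 1η_j1 respectively. If α_j + β_j + γ_j < t, then there exists a decomposition of δ as a sum of at most t fault vectors in which every position of the run η_j is covered by the support of some fault vector (i.e., all zeros of η_j are XOR zeros). -/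
/-- A fault vector's support on `m` positions: empty, a singleton, or an adjacent pair. -/
def IsFaultSupp (m : ℕ) (s : Finset ℕ) : Prop :=
  s = ∅ ∨ (∃ i, i < m ∧ s = {i}) ∨ (∃ i, i + 1 < m ∧ s = ({i, i + 1} : Finset ℕ))

/-- A nonzero fault support lying inside the segment `[lo, lo + len)`. -/
def SegFault (lo len : ℕ) (s : Finset ℕ) : Prop :=
  (∃ i, lo ≤ i ∧ i < lo + len ∧ s = {i}) ∨
  (∃ i, lo ≤ i ∧ i + 1 < lo + len ∧ s = ({i, i + 1} : Finset ℕ))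

/-- `F` is a list of fault vectors inside the segment starting at `lo` producing the
substring `L` over `𝔽₂`. -/
def ProducesSeg (lo : ℕ) (L : List Bool) (F : List (Finset ℕ)) : Prop :=
  (∀ s ∈ F, SegFault lo L.length s) ∧
  ∀ p, (if L.getD p false = true then (1 : ZMod 2) else 0)
      = (F.countP (fun s => decide (lo + p ∈ s)) : ℕ)

/-!
The block `1 0^γ 1` around the run is the XOR of the `γ + 1` adjacent pairs `e_i + e_{i+1}`
running from one bounding one to the other: the sum telescopes to its endpoints, and every zero
of the run lies in the support of a pair. Where the run touches an end of `δ` and a bounding one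
is missing, the chain is one pair shorter and a singleton `e_i` cancels its endpoint, so the
count stays `γ + 1`. Faults producing the parts of `δ` before and after the block live on
disjoint segments, so together with these there are `α + (γ + 1) + β ≤ t` faults.
-/

namespace SegFault

theorem bounds_of_mem {lo len : ℕ} {s : Finset ℕ} (h : SegFault lo len s) {q : ℕ}
    (hq : q ∈ s) : lo ≤ q ∧ q < lo + len := by
  rcases h with ⟨i, _, _, rfl⟩ | ⟨i, _, _, rfl⟩ <;> simp at hq <;> omega

theorem mono {lo len lo' len' : ℕ} {s : Finset ℕ} (h : SegFault lo' len' s)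
    (hlo : lo ≤ lo') (hhi : lo' + len' ≤ lo + len) : SegFault lo len s := by
  rcases h with ⟨i, _, _, rfl⟩ | ⟨i, _, _, rfl⟩
  · exact Or.inl ⟨i, by omega, by omega, rfl⟩
  · exact Or.inr ⟨i, by omega, by omega, rfl⟩

theorem isFaultSupp {m : ℕ} {s : Finset ℕ} (h : SegFault 0 m s) : IsFaultSupp m s := by
  rcases h with ⟨i, _, _, rfl⟩ | ⟨i, _, _, rfl⟩
  · exact Or.inr (Or.inl ⟨i, by omega, rfl⟩)
  · exact Or.inr (Or.inr ⟨i, by omega, rfl⟩)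

end SegFault

theorem countP_mem_eq_zero_of_forall_segFault {F : List (Finset ℕ)} {lo len q : ℕ}
    (hF : ∀ s ∈ F, SegFault lo len s) (hq : q < lo ∨ lo + len ≤ q) :
    F.countP (fun s => decide (q ∈ s)) = 0 := by
  refine List.countP_eq_zero.mpr fun s hs hqs => ?_
  have := (hF s hs).bounds_of_mem (of_decide_eq_true hqs)
  omega

theorem ProducesSeg.append {lo : ℕ} {P Q : List Bool} {FP FQ : List (Finset ℕ)}
    (hP : ProducesSeg lo P FP) (hQ : ProducesSeg (lo + P.length) Q FQ) :
    ProducesSeg lo (P ++ Q) (FP ++ FQ) := by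
  refine ⟨fun s hs => ?_, fun p => ?_⟩
  · rcases List.mem_append.1 hs with h | h
    · exact (hP.1 s h).mono le_rfl (by simp)
    · exact (hQ.1 s h).mono (by omega) (by simp; omega)
  rw [List.countP_append, List.getD_eq_getElem?_getD]
  rcases lt_or_ge p P.length with hp | hp
  · rw [List.getElem?_append_left hp, ← List.getD_eq_getElem?_getD, hP.2 p,
      countP_mem_eq_zero_of_forall_segFault hQ.1 (by omega), add_zero]
  · rw [List.getElem?_append_right hp, ← List.getD_eq_getElem?_getD, hQ.2,
      countP_mem_eq_zero_of_forall_segFault hP.1 (by omega), zero_add, Nat.add_assoc,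
      Nat.add_sub_cancel' hp]

def adjChain (a n : ℕ) : List (Finset ℕ) :=
  (List.range n).map fun k => {a + k, a + k + 1}

theorem countP_adjChain (a n q : ℕ) :
    (((adjChain a n).countP fun s => decide (q ∈ s) : ℕ) : ZMod 2)
      = (if q = a then 1 else 0) + (if q = a + n then 1 else 0) := by
  induction n with
  | zero =>
    simp only [adjChain, List.range_zero, List.map_nil, List.countP_nil, Nat.cast_zero, add_zero]
    split_ifs <;> decide
  | succ n ih =>
    rw [adjChain, List.range_succ, List.map_append, List.countP_append, Nat.cast_add,
      ← adjChain, ih]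
    simp only [List.map_cons, List.map_nil, List.countP_singleton, Finset.mem_insert,
      Finset.mem_singleton, decide_eq_true_eq]
    split_ifs <;> first | omega | decide

theorem exists_mem_adjChain {a n p : ℕ} (hap : a ≤ p) (hpn : p < a + n) :
    ∃ s ∈ adjChain a n, p ∈ s :=
  ⟨{a + (p - a), a + (p - a) + 1},
    List.mem_map.mpr ⟨p - a, List.mem_range.mpr (by omega), rfl⟩,
    by simp only [Finset.mem_insert, Finset.mem_singleton]; omega⟩

def runBlock (l r : Bool) (γ : ℕ) : List Bool :=
  (if l then [true] else []) ++ List.replicate γ false ++ (if r then [true] else [])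

theorem length_runBlock (l r : Bool) (γ : ℕ) :
    (runBlock l r γ).length = (if l then 1 else 0) + γ + (if r then 1 else 0) := by
  simp only [runBlock, List.length_append, List.length_replicate, apply_ite List.length,
    List.length_singleton, List.length_nil]

theorem getD_runBlock (l r : Bool) (γ p : ℕ) :
    (runBlock l r γ).getD p false = true ↔
      (l = true ∧ p = 0) ∨ (r = true ∧ p = (if l then 1 else 0) + γ) := by
  cases l <;> cases r <;>
    simp only [runBlock, Bool.false_eq_true, ↓reduceIte, List.nil_append, List.append_nil,
      List.cons_append, List.getD_eq_getElem?_getD, List.getElem?_append, List.getElem?_cons,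
      List.length_replicate, List.getElem?_replicate, List.length_nil, not_lt_zero,
      not_false_eq_true, getElem?_neg, false_and, true_and, zero_add, false_or, or_false,
      or_self, iff_false, Bool.not_eq_true] <;>
    split_ifs <;> simp_all <;> omega

def runFaults (a len : ℕ) (l r : Bool) : List (Finset ℕ) :=
  (if l then [] else [{a}]) ++ adjChain a (len - 1) ++ (if r then [] else [{a + (len - 1)}])

theorem length_runFaults (a len : ℕ) (l r : Bool) :
    (runFaults a len l r).length
      = (if l then 0 else 1) + (len - 1) + (if r then 0 else 1) := by
  simp only [runFaults, adjChain, List.length_append, List.length_map, List.length_range,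
    apply_ite List.length, List.length_singleton, List.length_nil]

theorem countP_runFaults (a len q : ℕ) (l r : Bool) :
    (((runFaults a len l r).countP fun s => decide (q ∈ s) : ℕ) : ZMod 2)
      = (if l = true ∧ q = a then 1 else 0)
        + (if r = true ∧ q = a + (len - 1) then 1 else 0) := by
  rw [runFaults, List.countP_append, List.countP_append, Nat.cast_add, Nat.cast_add,
    countP_adjChain]
  cases l <;> cases r <;>
    simp only [if_true, if_false, Bool.false_eq_true, true_and, false_and, List.countP_nil,
      List.countP_singleton, Finset.mem_singleton, decide_eq_true_eq] <;>
    split_ifs <;> first | omega | decide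

theorem segFault_of_mem_runFaults {a len : ℕ} {l r : Bool} (hlen : 0 < len) {s : Finset ℕ}
    (hs : s ∈ runFaults a len l r) : SegFault a len s := by
  simp only [runFaults, adjChain, List.mem_append, List.mem_map, List.mem_range] at hs
  rcases hs with (hs | ⟨k, hk, rfl⟩) | hs
  · cases l
    · exact Or.inl ⟨a, le_rfl, by omega, List.mem_singleton.mp hs⟩
    · exact absurd hs List.not_mem_nil
  · exact Or.inr ⟨a + k, by omega, by omega, rfl⟩
  · cases r
    · exact Or.inl ⟨a + (len - 1), by omega, by omega, List.mem_singleton.mp hs⟩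
    · exact absurd hs List.not_mem_nil

theorem length_runFaults_runBlock (a : ℕ) (l r : Bool) {γ : ℕ} (hγ : 0 < γ) :
    (runFaults a (runBlock l r γ).length l r).length = γ + 1 := by
  rw [length_runFaults, length_runBlock]
  cases l <;> cases r <;> simp only [if_true, if_false, Bool.false_eq_true] <;> omega

theorem producesSeg_runBlock (a : ℕ) (l r : Bool) {γ : ℕ} (hγ : 0 < γ) :
    ProducesSeg a (runBlock l r γ) (runFaults a (runBlock l r γ).length l r) := by
  have hlen := length_runBlock l r γ
  refine ⟨fun s hs => segFault_of_mem_runFaults (by split_ifs at hlen <;> omega) hs,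
    fun p => ?_⟩
  have hbit := getD_runBlock l r γ p
  rw [countP_runFaults, hlen]
  cases l <;> cases r <;> simp only [if_true, if_false, Bool.false_eq_true, true_and,
    false_and, false_or, or_false] at hbit ⊢ <;> split_ifs <;> simp_all

theorem exists_mem_runFaults_of_mem_run (a : ℕ) (l r : Bool) (γ : ℕ) {p : ℕ}
    (hp₁ : a + (if l then 1 else 0) ≤ p) (hp₂ : p < a + (if l then 1 else 0) + γ) :
    ∃ s ∈ runFaults a (runBlock l r γ).length l r, p ∈ s := by
  rw [length_runBlock]
  rcases lt_or_ge p (a + ((if l then 1 else 0) + γ + (if r then 1 else 0) - 1)) with hpn | hpn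
  · obtain ⟨s, hs, hps⟩ := exists_mem_adjChain (by split_ifs at hp₁ <;> omega) hpn
    exact ⟨s, List.mem_append_left _ (List.mem_append_right _ hs), hps⟩
  · cases r
    · refine ⟨_, List.mem_append_right _ (List.mem_singleton_self _), ?_⟩
      simp only [Finset.mem_singleton, if_false, Bool.false_eq_true] at hpn ⊢
      split_ifs at * <;> omega
    · simp only [if_true] at hpn
      split_ifs at * <;> omega

theorem unusable_run_complete_general (t m : ℕ)
    (L : List Bool) (hL : L.length = m)
    (A B : List Bool) (γ : ℕ) (hγ : 0 < γ) (leftOne rightOne : Bool)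
    (hsplit : L = A ++ (if leftOne then [true] else []) ++ List.replicate γ false
        ++ (if rightOne then [true] else []) ++ B)
    (α β : ℕ)
    (hα : IsLeast {k | ∃ F : List (Finset ℕ), F.length = k ∧ ProducesSeg 0 A F} α)
    (hβ : IsLeast {k | ∃ F : List (Finset ℕ), F.length = k ∧
        ProducesSeg (A.length + (if leftOne then 1 else 0) + γ
          + (if rightOne then 1 else 0)) B F} β)
    (hlt : α + β + γ < t) :
    ∃ F : List (Finset ℕ), F.length ≤ t ∧ (∀ s ∈ F, IsFaultSupp m s) ∧
      (∀ p, (if L.getD p false = true then (1 : ZMod 2) else 0)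
          = (F.countP (fun s => decide (p ∈ s)) : ℕ)) ∧
      ∀ p, A.length + (if leftOne then 1 else 0) ≤ p →
        p < A.length + (if leftOne then 1 else 0) + γ → ∃ s ∈ F, p ∈ s := by
  obtain ⟨⟨FA, rfl, hFA⟩, -⟩ := hα
  obtain ⟨⟨FB, rfl, hFB⟩, -⟩ := hβ
  set Fm := runFaults A.length (runBlock leftOne rightOne γ).length leftOne rightOne
  have hblocks : L = A ++ runBlock leftOne rightOne γ ++ B := by simp [hsplit, runBlock]
  have hprod : ProducesSeg 0 L (FA ++ Fm ++ FB) := by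
    rw [hblocks]
    refine (hFA.append ?_).append ?_
    · simpa using producesSeg_runBlock A.length leftOne rightOne hγ
    · simpa [length_runBlock, add_assoc] using hFB
  refine ⟨FA ++ Fm ++ FB, ?_, fun s hs => ?_, fun p => by simpa using hprod.2 p,
    fun p hp₁ hp₂ => ?_⟩
  · simp only [List.length_append, Fm, length_runFaults_runBlock A.length leftOne rightOne hγ]
    omega
  · exact (hL ▸ hprod.1 s hs).isFaultSupp
  · obtain ⟨s, hs, hps⟩ :=
      exists_mem_runFaults_of_mem_run A.length leftOne rightOne γ hp₁ hp₂
    exact ⟨s, by simp [Fm, hs], hps⟩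

/-- Completeness direction of Theorem 1: if `α + β + γ < t`, where `α` and `β` are the
minimum numbers of fault vectors producing the substrings before and after the block,
then the difference vector has a decomposition into at most `t` fault vectors covering
every position of the zero-run (all zeros of the run are XOR zeros). -/
theorem unusable_run_complete (t m : ℕ) (ht : 1 ≤ t)
    (L : List Bool) (hL : L.length = m)
    (A B : List Bool) (γ : ℕ) (hγ : 0 < γ) (leftOne rightOne : Bool)
    (hsplit : L = A ++ (if leftOne then [true] else []) ++ List.replicate γ false
        ++ (if rightOne then [true] else []) ++ B)
    (hA : leftOne = false → A = []) (hB : rightOne = false → B = [])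
    (α β : ℕ)
    (hα : IsLeast {k | ∃ F : List (Finset ℕ), F.length = k ∧ ProducesSeg 0 A F} α)
    (hβ : IsLeast {k | ∃ F : List (Finset ℕ), F.length = k ∧
        ProducesSeg (A.length + (if leftOne then 1 else 0) + γ
          + (if rightOne then 1 else 0)) B F} β)
    (hlt : α + β + γ < t) :
    ∃ F : List (Finset ℕ), F.length ≤ t ∧ (∀ s ∈ F, IsFaultSupp m s) ∧
      (∀ p, (if L.getD p false = true then (1 : ZMod 2) else 0)
          = (F.countP (fun s => decide (p ∈ s)) : ℕ)) ∧
      ∀ p, A.length + (if leftOne then 1 else 0) ≤ p →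
        p < A.length + (if leftOne then 1 else 0) + γ → ∃ s ∈ F, p ∈ s :=
  unusable_run_complete_general t m L hL A B γ hγ leftOne rightOne hsplit α β hα hβ hlt
end

section
/- Fix an even integer t ≥ 2. The maximum length of a binary string δ with the following property is ((t+2)/2)·((t+4)/2) − 3: writing δ = η₁ 1 η₂ 1 ⋯ 1 η_c as zero-runs separated by ones, every zero-run η_j of positive length γ_j satisfies α_j + β_j + γ_j ≤ t − 1, where α_j (resp. β_j) is the number of non-overlapping 11 substrings plus remaining single ones strictly before (resp. after) the block 1η_j1 (with α₁ = 0 and β_c = 0). -/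
/-!
Write `δ = 1^b₀ 0^g₁ 1^b₁ ⋯ 0^gₚ 1^bₚ` and let `C` be the greedy one-count of `δ`. Cutting
the block `1 0^gⱼ 1` out of `δ` removes one `1` from each of the neighbouring one-runs, so
`αⱼ + βⱼ = C - bⱼ₋₁ % 2 - bⱼ % 2` and the constraint on the `j`-th run reads
`gⱼ + C + 1 ≤ t + bⱼ₋₁ % 2 + bⱼ % 2`. Summing over `j` and using `b + b % 2 = 2 ⌈b/2⌉` gives
`|δ| + p C + 1 ≤ p t + 2 C`; moreover `C ≤ t` by the first run, and `p ≤ C + 1` because the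
interior one-runs are nonempty. For `t = 2s` this forces `|δ| + 3 ≤ (s+1)(s+2)`, with equality
for `p = s + 1`, `C = s`. In the extremal string all ones are isolated, so `α + β` is at most the
number of ones outside the block and each constraint is tight.
-/

/-- Greedy count of non-overlapping `11` substrings plus remaining single ones. -/
def onesCount : List Bool → ℕ
  | [] => 0
  | false :: l => onesCount l
  | [true] => 1
  | true :: _ :: l => 1 + onesCount l

/-- Every zero-run of positive length `γ` in the string satisfies `α + β + γ ≤ t - 1`,
where `α` (resp. `β`) counts non-overlapping `11` substrings plus remaining ones strictly
before (resp. after) the block `1 0^γ 1` (with boundary conventions `α₁ = 0`, `β_c = 0`). -/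
def NoUsableRun (t : ℕ) (L : List Bool) : Prop :=
  (∀ A B γ, 0 < γ → L = A ++ [true] ++ List.replicate γ false ++ [true] ++ B →
      onesCount A + onesCount B + γ ≤ t - 1) ∧
  (∀ B γ, 0 < γ → L = List.replicate γ false ++ [true] ++ B → onesCount B + γ ≤ t - 1) ∧
  (∀ A γ, 0 < γ → L = A ++ [true] ++ List.replicate γ false → onesCount A + γ ≤ t - 1) ∧
  (∀ γ, 0 < γ → L = List.replicate γ false → γ ≤ t - 1)

open List

theorem onesCount_append_false_cons (Y : List Bool) :
    ∀ X : List Bool, onesCount (X ++ false :: Y) = onesCount X + onesCount Y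
  | [] => by simp [onesCount]
  | false :: X => by simp [onesCount, onesCount_append_false_cons Y X]
  | [true] => by simp [onesCount]
  | true :: _ :: X => by simp only [cons_append, onesCount, onesCount_append_false_cons Y X]; omega

theorem onesCount_replicate_false_append (Y : List Bool) (n : ℕ) :
    onesCount (replicate n false ++ Y) = onesCount Y := by
  induction n with
  | zero => rfl
  | succ n ih => simpa [replicate_succ, onesCount] using ih

theorem onesCount_append_replicate_false_append (X Y : List Bool) {g : ℕ} (hg : 0 < g) :
    onesCount (X ++ replicate g false ++ Y) = onesCount X + onesCount Y := by
  obtain ⟨k, rfl⟩ := Nat.exists_eq_add_one_of_ne_zero hg.ne'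
  rw [replicate_succ, append_assoc, cons_append, onesCount_append_false_cons,
    onesCount_replicate_false_append]

theorem onesCount_replicate_true : ∀ n : ℕ, onesCount (replicate n true) = (n + 1) / 2
  | 0 => rfl
  | 1 => rfl
  | n + 2 => by
    show 1 + onesCount (replicate n true) = _
    rw [onesCount_replicate_true n]
    omega

theorem onesCount_append_replicate_true {P : List Bool} (hP : P.getLast? ≠ some true) (b : ℕ) :
    onesCount (P ++ replicate b true) = onesCount P + (b + 1) / 2 := by
  rcases eq_nil_or_concat P with rfl | ⟨P, x, rfl⟩
  · simp [onesCount_replicate_true, onesCount]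
  · obtain rfl : x = false := by simpa using hP
    rw [concat_eq_append, append_assoc, singleton_append, onesCount_append_false_cons,
      onesCount_append_false_cons, onesCount_replicate_true]
    rfl

theorem onesCount_replicate_true_append {Q : List Bool} (hQ : Q.head? ≠ some true) (b : ℕ) :
    onesCount (replicate b true ++ Q) = (b + 1) / 2 + onesCount Q := by
  rcases Q with _ | ⟨x, Q⟩
  · simp [onesCount_replicate_true, onesCount]
  · obtain rfl : x = false := by simpa using hQ
    rw [onesCount_append_false_cons, onesCount_replicate_true, onesCount]

theorem onesCount_le_count : ∀ l : List Bool, onesCount l ≤ l.count true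
  | [] => le_rfl
  | false :: l => by simpa [onesCount] using onesCount_le_count l
  | [true] => le_rfl
  | true :: x :: l => by
    have := onesCount_le_count l
    cases x <;> simp only [onesCount, count_cons_self, count_cons_of_ne, ne_eq,
      Bool.false_eq_true, not_false_eq_true] <;> omega

theorem onesCount_dropLast_append_replicate_true {P : List Bool} (hP : P.getLast? ≠ some true)
    {b : ℕ} (hPb : b = 0 → P = []) :
    onesCount (P ++ replicate b true).dropLast + b % 2 = onesCount (P ++ replicate b true) := by
  rcases Nat.eq_zero_or_pos b with rfl | hb
  · simp [hPb rfl, onesCount]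
  obtain ⟨k, rfl⟩ := Nat.exists_eq_add_one_of_ne_zero hb.ne'
  rw [replicate_succ', ← append_assoc, dropLast_concat, append_assoc, ← replicate_succ',
    onesCount_append_replicate_true hP, onesCount_append_replicate_true hP]
  omega

theorem onesCount_tail_replicate_true_append {Q : List Bool} (hQ : Q.head? ≠ some true)
    {c : ℕ} (hQc : c = 0 → Q = []) :
    onesCount (replicate c true ++ Q).tail + c % 2 = onesCount (replicate c true ++ Q) := by
  rcases Nat.eq_zero_or_pos c with rfl | hc
  · simp [hQc rfl, onesCount]
  obtain ⟨k, rfl⟩ := Nat.exists_eq_add_one_of_ne_zero hc.ne'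
  rw [replicate_succ, cons_append, tail_cons, ← cons_append, ← replicate_succ,
    onesCount_replicate_true_append hQ, onesCount_replicate_true_append hQ]
  omega

/-- `ofRuns b₀ [(g₁, b₁), …, (gₚ, bₚ)]` is the string `1^b₀ 0^g₁ 1^b₁ ⋯ 0^gₚ 1^bₚ`. -/
def ofRuns : ℕ → List (ℕ × ℕ) → List Bool
  | b, [] => replicate b true
  | b, (g, c) :: r => replicate b true ++ replicate g false ++ ofRuns c r

def RunsCanonical : List (ℕ × ℕ) → Prop
  | [] => True
  | (g, c) :: r => 0 < g ∧ (r ≠ [] → 0 < c) ∧ RunsCanonical r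

theorem ofRuns_eq_replicate_append (b : ℕ) (ps : List (ℕ × ℕ)) :
    ofRuns b ps = replicate b true ++ ofRuns 0 ps := by
  cases ps <;> simp [ofRuns]

theorem ofRuns_succ (b : ℕ) (ps : List (ℕ × ℕ)) : ofRuns (b + 1) ps = true :: ofRuns b ps := by
  rw [ofRuns_eq_replicate_append, ofRuns_eq_replicate_append b, replicate_succ, cons_append]

theorem exists_ofRuns (L : List Bool) : ∃ b ps, RunsCanonical ps ∧ ofRuns b ps = L := by
  induction L with
  | nil => exact ⟨0, [], trivial, rfl⟩
  | cons x L ih =>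
    obtain ⟨b, ps, hps, rfl⟩ := ih
    cases x
    · rcases Nat.eq_zero_or_pos b with rfl | hb
      · rcases ps with _ | ⟨⟨g, c⟩, r⟩
        · exact ⟨0, [(1, 0)], ⟨one_pos, by simp, trivial⟩, rfl⟩
        · exact ⟨0, (g + 1, c) :: r, ⟨g.succ_pos, hps.2⟩, by simp [ofRuns, replicate_succ]⟩
      · exact ⟨0, (1, b) :: ps, ⟨one_pos, fun _ => hb, hps⟩, by simp [ofRuns]⟩
    · exact ⟨b + 1, ps, hps, ofRuns_succ b ps⟩

theorem head?_ofRuns_zero {ps : List (ℕ × ℕ)} (hps : RunsCanonical ps) :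
    (ofRuns 0 ps).head? ≠ some true := by
  rcases ps with _ | ⟨⟨g, c⟩, r⟩
  · simp [ofRuns]
  · obtain ⟨k, rfl⟩ := Nat.exists_eq_add_one_of_ne_zero hps.1.ne'
    simp [ofRuns, replicate_succ]

theorem onesCount_ofRuns {ps : List (ℕ × ℕ)} (hps : RunsCanonical ps) (b : ℕ) :
    onesCount (ofRuns b ps) = (b + 1) / 2 + onesCount (ofRuns 0 ps) := by
  rw [ofRuns_eq_replicate_append, onesCount_replicate_true_append (head?_ofRuns_zero hps)]

theorem onesCount_ofRuns_cons {g c : ℕ} {r : List (ℕ × ℕ)} (hps : RunsCanonical ((g, c) :: r))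
    (b : ℕ) : onesCount (ofRuns b ((g, c) :: r)) = (b + 1) / 2 + onesCount (ofRuns c r) := by
  rw [onesCount_ofRuns hps, ofRuns, replicate_zero, nil_append,
    onesCount_replicate_false_append]

theorem length_le_onesCount_ofRuns_zero :
    ∀ {ps : List (ℕ × ℕ)}, RunsCanonical ps → ps.length ≤ onesCount (ofRuns 0 ps) + 1
  | [], _ => by simp
  | [_], _ => by simp
  | (g, c) :: q :: r, hps => by
    have ih := length_le_onesCount_ofRuns_zero hps.2.2
    have hc := hps.2.1 (cons_ne_nil q r)
    rw [onesCount_ofRuns_cons hps, onesCount_ofRuns hps.2.2]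
    simp only [length_cons] at ih ⊢
    omega

theorem add_three_le_of_mul_le {N p C s : ℕ} (hpC : p ≤ C + 1) (hC : C ≤ 2 * s)
    (h : N + p * C + 1 ≤ p * (2 * s) + 2 * C) : N + 3 ≤ (s + 1) * (s + 2) := by
  rcases le_or_gt p 2 with hp | hp
  · interval_cases p <;> nlinarith [Nat.le_mul_self s]
  obtain ⟨q, rfl⟩ : ∃ q, p = q + 2 := ⟨p - 2, by omega⟩
  have hqC : q * (q + 1) ≤ q * C := Nat.mul_le_mul_left q (by omega)
  have hsq : 0 ≤ ((s : ℤ) - q) * (s - q - 1) := by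
    rcases le_or_gt s q with hsq | hsq <;> nlinarith
  zify at *
  nlinarith

namespace NoUsableRun

variable {t : ℕ}

theorem run_le {X Y : List Bool} {g : ℕ} (h : NoUsableRun t (X ++ replicate g false ++ Y))
    (hg : 0 < g) (hX : X.getLast? ≠ some false) (hY : Y.head? ≠ some false) :
    onesCount X.dropLast + onesCount Y.tail + g ≤ t - 1 := by
  obtain ⟨hmid, hleft, hright, hall⟩ := h
  rcases eq_nil_or_concat X with rfl | ⟨A, x, rfl⟩ <;> rcases Y with _ | ⟨y, B⟩
  · simpa [onesCount] using hall g hg (by simp)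
  · obtain rfl : y = true := by simpa using hY
    simpa [onesCount] using hleft B g hg (by simp)
  · obtain rfl : x = true := by simpa using hX
    simpa [onesCount] using hright A g hg (by simp)
  · obtain rfl : x = true := by simpa using hX
    obtain rfl : y = true := by simpa using hY
    simpa using hmid A B g hg (by simp)

theorem run_bound {P Q : List Bool} {b g c : ℕ}
    (h : NoUsableRun t (P ++ replicate b true ++ replicate g false ++ replicate c true ++ Q))
    (hg : 0 < g) (hP : P.getLast? ≠ some true) (hPb : b = 0 → P = [])
    (hQ : Q.head? ≠ some true) (hQc : c = 0 → Q = []) :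
    g + onesCount (P ++ replicate b true ++ replicate g false ++ replicate c true ++ Q) + 1 ≤
      t + b % 2 + c % 2 := by
  rw [append_assoc _ (replicate c true)] at h ⊢
  have hX : (P ++ replicate b true).getLast? ≠ some false := by
    rcases Nat.eq_zero_or_pos b with rfl | hb
    · simp [hPb rfl]
    · simp [getLast?_replicate, hb.ne']
  have hY : (replicate c true ++ Q).head? ≠ some false := by
    rcases Nat.eq_zero_or_pos c with rfl | hc
    · simp [hQc rfl]
    · simp [head?_replicate, hc.ne']
  have := h.run_le hg hX hY
  rw [onesCount_append_replicate_false_append _ _ hg,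
    ← onesCount_dropLast_append_replicate_true hP hPb,
    ← onesCount_tail_replicate_true_append hQ hQc]
  omega

theorem run_bound_ofRuns {P : List Bool} {b g c : ℕ} {r : List (ℕ × ℕ)}
    (h : NoUsableRun t (P ++ ofRuns b ((g, c) :: r))) (hps : RunsCanonical ((g, c) :: r))
    (hP : P.getLast? ≠ some true) (hPb : b = 0 → P = []) :
    g + onesCount (P ++ ofRuns b ((g, c) :: r)) + 1 ≤ t + b % 2 + c % 2 := by
  have hQc : c = 0 → ofRuns 0 r = [] := fun hc => by
    rcases r with _ | ⟨q, r⟩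
    · rfl
    · exact absurd hc (hps.2.1 (cons_ne_nil q r)).ne'
  have hstr : P ++ ofRuns b ((g, c) :: r) =
      P ++ replicate b true ++ replicate g false ++ replicate c true ++ ofRuns 0 r := by
    simp [ofRuns, ofRuns_eq_replicate_append c]
  rw [hstr] at h ⊢
  exact h.run_bound hps.1 hP hPb (head?_ofRuns_zero hps.2.2) hQc

theorem length_ofRuns_add_mul_onesCount_le :
    ∀ {ps : List (ℕ × ℕ)} {P : List Bool} {b : ℕ}, NoUsableRun t (P ++ ofRuns b ps) →
      RunsCanonical ps → ps ≠ [] → P.getLast? ≠ some true → (b = 0 → P = []) →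
      (ofRuns b ps).length + ps.length * onesCount (P ++ ofRuns b ps) + 1 ≤
        ps.length * t + 2 * onesCount (ofRuns b ps)
  | [], _, _, _, _, hne, _, _ => absurd rfl hne
  | (g, c) :: r, P, b, h, hps, _, hP, hPb => by
    have hrun := h.run_bound_ofRuns hps hP hPb
    rw [onesCount_ofRuns_cons hps]
    simp only [ofRuns, length_append, length_replicate, length_cons, add_one_mul] at hrun ⊢
    rcases r with _ | ⟨q, r⟩
    · simp only [ofRuns, length_replicate, length_nil, zero_mul, onesCount_replicate_true] at hrun ⊢
      omega
    have hc := hps.2.1 (cons_ne_nil q r)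
    have ih := length_ofRuns_add_mul_onesCount_le (P := P ++ replicate b true ++ replicate g false)
      (by simpa [ofRuns] using h) hps.2.2 (cons_ne_nil q r)
      (by simp [getLast?_replicate, hps.1.ne']) (fun hc0 => absurd hc0 hc.ne')
    simp only [ofRuns, append_assoc] at ih hrun ⊢
    omega

theorem length_add_three_le {s : ℕ} {L : List Bool} (h : NoUsableRun (2 * s) L)
    (hL : false ∈ L) : L.length + 3 ≤ (s + 1) * (s + 2) := by
  obtain ⟨b, ps, hps, rfl⟩ := exists_ofRuns L
  obtain ⟨⟨g, c⟩, r, rfl⟩ : ∃ x r, ps = x :: r := by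
    rcases ps with _ | ⟨x, r⟩
    · simp [ofRuns] at hL
    · exact ⟨x, r, rfl⟩
  have hsum := length_ofRuns_add_mul_onesCount_le (P := []) h hps (cons_ne_nil _ _)
    (by simp) (fun _ => rfl)
  have hfirst := run_bound_ofRuns (P := []) h hps (by simp) (fun _ => rfl)
  have hlen := length_le_onesCount_ofRuns_zero hps
  have hC := onesCount_ofRuns hps b
  simp only [nil_append] at hsum hfirst
  refine add_three_le_of_mul_le (by omega) ?_ hsum
  have := hps.1
  omega

end NoUsableRun

theorem List.IsInfix.of_append_cons_of_notMem {α : Type*} {l X Y : List α} {a : α}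
    (h : l <:+: X ++ a :: Y) (ha : a ∉ l) : l <:+: X ∨ l <:+: Y := by
  obtain ⟨u, v, huv⟩ := h
  rw [append_assoc] at huv
  rcases append_eq_append_iff.1 huv with ⟨w, rfl, hw⟩ | ⟨w, rfl, hw⟩
  · rcases append_eq_append_iff.1 hw with ⟨w', rfl, -⟩ | ⟨w', rfl, hw'⟩
    · exact Or.inl ⟨u, w', by simp⟩
    · rcases w' with _ | ⟨x, w'⟩
      · exact Or.inl ⟨u, [], by simp⟩
      · obtain ⟨rfl, -⟩ := cons_eq_cons.1 hw'
        exact absurd (by simp) ha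
  · rcases w with _ | ⟨x, w⟩
    · rcases l with _ | ⟨y, l⟩
      · exact Or.inl nil_infix
      · obtain ⟨rfl, -⟩ := cons_eq_cons.1 hw
        exact absurd mem_cons_self ha
    · obtain ⟨-, rfl⟩ := cons_eq_cons.1 hw
      exact Or.inr ⟨w, v, by simp⟩

theorem idxOf_true_replicate_false_append (a : ℕ) (X : List Bool) :
    (replicate a false ++ true :: X).idxOf true = a := by
  simp [idxOf_append_of_notMem, idxOf_cons_self]

def extremalTail (s : ℕ) : ℕ → List Bool
  | 0 => replicate s false
  | k + 1 => replicate (s + 1) false ++ true :: extremalTail s k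

/-- The paper's extremal string for `t = 2s`: zero-runs of lengths `s, s+1, …, s+1, s`
separated by single ones. -/
def extremal (s : ℕ) : List Bool := replicate s false ++ true :: extremalTail s (s - 1)

theorem length_extremalTail (s k : ℕ) : (extremalTail s k).length = s + k * (s + 2) := by
  induction k with
  | zero => simp [extremalTail]
  | succ k ih => simp only [extremalTail, length_append, length_replicate, length_cons, ih]; ring

theorem count_extremalTail (s k : ℕ) : (extremalTail s k).count true = k := by
  induction k with
  | zero => simp [extremalTail, count_replicate]
  | succ k ih => simp [extremalTail, count_replicate, ih]

theorem le_of_replicate_infix_extremalTail {s γ k : ℕ}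
    (h : replicate γ false <:+: extremalTail s k) : γ ≤ s + 1 := by
  induction k with
  | zero =>
    have := h.length_le
    simp only [extremalTail, length_replicate] at this
    omega
  | succ k ih =>
    rcases h.of_append_cons_of_notMem (by simp) with h | h
    · simpa using h.length_le
    · exact ih h

theorem exists_replicate_append_extremalTail (s a k : ℕ) :
    ∃ W, replicate a false ++ true :: extremalTail s k = W ++ true :: replicate s false := by
  induction k generalizing a with
  | zero => exact ⟨replicate a false, rfl⟩
  | succ k ih =>
    obtain ⟨W, hW⟩ := ih (s + 1)
    exact ⟨replicate a false ++ true :: W, by simp [extremalTail, hW]⟩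

theorem length_extremal {s : ℕ} (hs : 0 < s) : (extremal s).length = (s + 1) * (s + 2) - 3 := by
  obtain ⟨k, rfl⟩ := Nat.exists_eq_add_one_of_ne_zero hs.ne'
  simp only [extremal, length_append, length_replicate, length_cons, length_extremalTail,
    add_tsub_cancel_right]
  ring_nf
  omega

theorem false_mem_extremal {s : ℕ} (hs : 0 < s) : false ∈ extremal s := by
  simp [extremal, hs.ne']

theorem noUsableRun_extremal {s : ℕ} (hs : 0 < s) : NoUsableRun (2 * s) (extremal s) := by
  have hcount : (extremal s).count true = s := by
    simp only [extremal, count_append, count_replicate, beq_true, Bool.false_eq_true, ↓reduceIte,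
      count_cons_self, count_extremalTail, zero_add]
    omega
  have hzero : ∀ γ, replicate γ false <:+: extremal s → γ ≤ s + 1 := fun γ h => by
    rcases h.of_append_cons_of_notMem (by simp) with h | h
    · have := h.length_le
      simp only [length_replicate] at this
      omega
    · exact le_of_replicate_infix_extremalTail h
  refine ⟨fun A B γ _ heq => ?_, fun B γ _ heq => ?_, fun A γ _ heq => ?_, fun γ _ heq => ?_⟩
  · have := hzero γ (heq ▸ ⟨A ++ [true], [true] ++ B, by simp⟩)
    have := onesCount_le_count A
    have := onesCount_le_count B
    simp only [heq, append_assoc, cons_append, nil_append, count_append,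
      count_cons_self] at hcount
    omega
  · have hγ := congrArg (idxOf true) heq
    simp only [extremal, append_assoc, singleton_append,
      idxOf_true_replicate_false_append] at hγ
    have := onesCount_le_count B
    simp only [heq, append_assoc, cons_append, nil_append, count_append, count_cons_self,
      count_replicate, beq_true, Bool.false_eq_true, ↓reduceIte, zero_add] at hcount
    omega
  · obtain ⟨W, hW⟩ := exists_replicate_append_extremalTail s s (s - 1)
    have hγ := congrArg (fun l => (reverse l).idxOf true) (heq.symm.trans hW)
    simp only [reverse_append, reverse_cons, reverse_replicate, append_assoc, singleton_append,
      idxOf_true_replicate_false_append] at hγ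
    have := onesCount_le_count A
    simp only [heq, append_assoc, cons_append, nil_append, count_append, count_cons_self,
      count_replicate, beq_true, Bool.false_eq_true, ↓reduceIte, zero_add] at hcount
    omega
  · have : true ∈ extremal s := by simp [extremal]
    simp [heq] at this

/-- Even-`t` case of Theorem 2: the maximum length of a difference vector (containing at
least one zero) with no usable zero-run is `((t+2)/2)·((t+4)/2) − 3`. -/
theorem max_no_usable_even (t : ℕ) (ht : 2 ≤ t) (heven : Even t) :
    IsGreatest {n | ∃ L : List Bool, false ∈ L ∧ L.length = n ∧ NoUsableRun t L}
      (((t + 2) / 2) * ((t + 4) / 2) - 3) := by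
  obtain ⟨s, rfl⟩ := heven
  have hs : 0 < s := by omega
  rw [← two_mul, show (2 * s + 2) / 2 = s + 1 by omega, show (2 * s + 4) / 2 = s + 2 by omega]
  refine ⟨⟨extremal s, false_mem_extremal hs, length_extremal hs, noUsableRun_extremal hs⟩, ?_⟩
  rintro _ ⟨L, hL, rfl, h⟩
  have := h.length_add_three_le hL
  omega
end

section
/- Let t ≥ 1 be an odd integer and define g(p,q) = (t − p/2 − q/2 + 3/2)·(p − 2) + 2·(t − p/2 − q/2 + 1/2) + q. Then the maximum of g(p,q) over integers p ≥ 2 and q ≥ p − 1 with q − p + 1 even, subject to all run-length bounds t − p/2 − q/2 + 3/2 ≥ 0 and t − p/2 − q/2 + 1/2 ≥ 0 being nonnegative, equals ((t+3)/2)² − 3, attained at p = (t+3)/2 and q = p − 1. -/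
/-!
Writing `d = q + 1 - p ≥ 0`, the objective is the concave parabola `(t + 3 - p) p - 3` in `p`,
decreased by `d (p - 2) / 2 ≥ 0`. Its vertex `p = (t + 3)/2` is an integer when `t` is odd,
and `d = 0` there.
-/

namespace Case3a

def g (t p q : ℚ) : ℚ :=
  (t - p / 2 - q / 2 + 3 / 2) * (p - 2) + 2 * (t - p / 2 - q / 2 + 1 / 2) + q

theorem g_eq_vertex_form (t p q : ℚ) :
    g t p q = ((t + 3) / 2) ^ 2 - 3 - (p - (t + 3) / 2) ^ 2 - (q + 1 - p) * (p - 2) / 2 := by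
  unfold g; ring

theorem g_le {t p q : ℚ} (hp : 2 ≤ p) (hpq : p ≤ q + 1) : g t p q ≤ ((t + 3) / 2) ^ 2 - 3 := by
  rw [g_eq_vertex_form]
  have hd : 0 ≤ (q + 1 - p) * (p - 2) := mul_nonneg (by linarith) (by linarith)
  nlinarith [sq_nonneg (p - (t + 3) / 2)]

theorem g_vertex (k : ℚ) : g (2 * k + 1) (k + 2) (k + 1) = ((2 * k + 1 + 3) / 2) ^ 2 - 3 := by
  unfold g; ring

end Case3a

open Case3a in
theorem max_g_case3a_general (t : ℕ) (hodd : Odd t) :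
    IsGreatest {x : ℚ | ∃ p q : ℕ, 2 ≤ p ∧ p ≤ q + 1 ∧ Even (q + 1 - p) ∧
        0 ≤ (t : ℚ) - p / 2 - q / 2 + 3 / 2 ∧ 0 ≤ (t : ℚ) - p / 2 - q / 2 + 1 / 2 ∧
        x = ((t : ℚ) - p / 2 - q / 2 + 3 / 2) * ((p : ℚ) - 2)
            + 2 * ((t : ℚ) - p / 2 - q / 2 + 1 / 2) + q}
      ((((t : ℚ) + 3) / 2) ^ 2 - 3) ∧
    ∃ p q : ℕ, p = (t + 3) / 2 ∧ q = p - 1 ∧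
      ((t : ℚ) - p / 2 - q / 2 + 3 / 2) * ((p : ℚ) - 2)
          + 2 * ((t : ℚ) - p / 2 - q / 2 + 1 / 2) + q
        = (((t : ℚ) + 3) / 2) ^ 2 - 3 := by
  obtain ⟨k, rfl⟩ := hodd
  have hvertex : g ((2 * k + 1 : ℕ) : ℚ) ((k + 2 : ℕ) : ℚ) ((k + 1 : ℕ) : ℚ)
      = ((((2 * k + 1 : ℕ) : ℚ) + 3) / 2) ^ 2 - 3 := by
    push_cast; exact g_vertex k
  refine ⟨⟨⟨k + 2, k + 1, by omega, by omega, by simp, ?_, ?_, hvertex.symm⟩, ?_⟩,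
    ⟨k + 2, k + 1, by omega, by omega, hvertex⟩⟩
  · push_cast; linarith [(k.cast_nonneg : (0 : ℚ) ≤ k)]
  · push_cast; linarith [(k.cast_nonneg : (0 : ℚ) ≤ k)]
  · rintro x ⟨p, q, hp, hpq, -, -, -, rfl⟩
    exact g_le (by exact_mod_cast hp) (by exact_mod_cast hpq)

/-- Optimization from the proof of Theorem 2 (Case 3.a, odd `t`): the maximum of
`g(p,q) = (t − p/2 − q/2 + 3/2)(p−2) + 2(t − p/2 − q/2 + 1/2) + q` over integers
`p ≥ 2`, `q ≥ p−1` with `q − p + 1` even and both run-length bounds nonnegative is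
`((t+3)/2)² − 3`, attained at `p = (t+3)/2`, `q = p−1`. -/
theorem max_g_case3a (t : ℕ) (ht : 1 ≤ t) (hodd : Odd t) :
    IsGreatest {x : ℚ | ∃ p q : ℕ, 2 ≤ p ∧ p ≤ q + 1 ∧ Even (q + 1 - p) ∧
        0 ≤ (t : ℚ) - p / 2 - q / 2 + 3 / 2 ∧ 0 ≤ (t : ℚ) - p / 2 - q / 2 + 1 / 2 ∧
        x = ((t : ℚ) - p / 2 - q / 2 + 3 / 2) * ((p : ℚ) - 2)
            + 2 * ((t : ℚ) - p / 2 - q / 2 + 1 / 2) + q}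
      ((((t : ℚ) + 3) / 2) ^ 2 - 3) ∧
    ∃ p q : ℕ, p = (t + 3) / 2 ∧ q = p - 1 ∧
      ((t : ℚ) - p / 2 - q / 2 + 3 / 2) * ((p : ℚ) - 2)
          + 2 * ((t : ℚ) - p / 2 - q / 2 + 1 / 2) + q
        = (((t : ℚ) + 3) / 2) ^ 2 - 3 :=
  max_g_case3a_general t hodd
end

section
/- Let δ be a binary string that is a sum over 𝔽₂ of fault vectors (each a basis vector or an adjacent-pair vector e_i + e_{i+1}). Then the number of non-overlapping 11 substrings of δ (counted greedily from the left) plus the number of remaining ones of δ is a lower bound on the number of fault vectors in any such decomposition of δ. -/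
def greedyStarts : List Bool → Finset ℕ
  | [] => ∅
  | false :: l => (greedyStarts l).map (addRightEmbedding 1)
  | [true] => {0}
  | true :: _ :: l => insert 0 ((greedyStarts l).map (addRightEmbedding 2))

theorem card_greedyStarts : ∀ L : List Bool, (greedyStarts L).card = onesCount L
  | [] => rfl
  | false :: l => by simp [greedyStarts, onesCount, card_greedyStarts l]
  | [true] => rfl
  | true :: _ :: l => by
    simp [greedyStarts, onesCount, card_greedyStarts l, add_comm]

theorem getD_eq_true_of_mem_greedyStarts :
    ∀ {L : List Bool} {p : ℕ}, p ∈ greedyStarts L → L.getD p false = true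
  | [], p, h => by simp [greedyStarts] at h
  | false :: l, p, h => by
    obtain ⟨q, hq, rfl⟩ := Finset.mem_map.1 h
    simpa using getD_eq_true_of_mem_greedyStarts hq
  | [true], p, h => by simp_all [greedyStarts]
  | true :: _ :: l, p, h => by
    rcases Finset.mem_insert.1 h with rfl | h
    · rfl
    · obtain ⟨q, hq, rfl⟩ := Finset.mem_map.1 h
      simpa using getD_eq_true_of_mem_greedyStarts hq

theorem succ_notMem_greedyStarts :
    ∀ {L : List Bool} {p : ℕ}, p ∈ greedyStarts L → p + 1 ∉ greedyStarts L
  | [], p, h => by simp [greedyStarts] at h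
  | false :: l, p, h => by
    obtain ⟨q, hq, rfl⟩ := Finset.mem_map.1 h
    simpa [greedyStarts] using succ_notMem_greedyStarts hq
  | [true], p, h => by simp_all [greedyStarts]
  | true :: _ :: l, p, h => by
    rcases Finset.mem_insert.1 h with rfl | h
    · simp [greedyStarts]
    · obtain ⟨q, hq, rfl⟩ := Finset.mem_map.1 h
      simpa [greedyStarts] using succ_notMem_greedyStarts hq

theorem subsingleton_greedyStarts_of_subset_pair {L : List Bool} {s : Finset ℕ} {i : ℕ}
    (hs : s ⊆ {i, i + 1}) : ({p ∈ greedyStarts L | p ∈ s} : Set ℕ).Subsingleton := by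
  have hi : ∀ p ∈ s, p = i ∨ p = i + 1 := fun p hp => by simpa using hs hp
  rintro a ⟨ha, has⟩ b ⟨hb, hbs⟩
  rcases hi a has with rfl | rfl <;> rcases hi b hbs with rfl | rfl
  · rfl
  · exact absurd hb (succ_notMem_greedyStarts ha)
  · exact absurd ha (succ_notMem_greedyStarts hb)
  · rfl

theorem IsFaultSupp.exists_subset_pair {m : ℕ} {s : Finset ℕ} (hs : IsFaultSupp m s) :
    ∃ i, s ⊆ {i, i + 1} := by
  rcases hs with rfl | ⟨i, -, rfl⟩ | ⟨i, -, rfl⟩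
  · exact ⟨0, Finset.empty_subset _⟩
  · exact ⟨i, by simp⟩
  · exact ⟨i, subset_rfl⟩

theorem onesCount_le_faults_general (m : ℕ) (L : List Bool)
    (F : List (Finset ℕ)) (hFsupp : ∀ s ∈ F, IsFaultSupp m s)
    (hFsum : ∀ p, (if L.getD p false = true then (1 : ZMod 2) else 0)
        = (F.countP (fun s => decide (p ∈ s)) : ℕ)) :
    onesCount L ≤ F.length := by
  have hcover : ∀ p ∈ greedyStarts L, ∃ s ∈ F.toFinset, p ∈ s := by
    intro p hp
    have hodd := hFsum p
    rw [if_pos (getD_eq_true_of_mem_greedyStarts hp)] at hodd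
    have hpos : 0 < F.countP (fun s => decide (p ∈ s)) :=
      Nat.pos_of_ne_zero fun h0 => by simp [h0] at hodd
    obtain ⟨s, hs, hps⟩ := List.countP_pos_iff.1 hpos
    exact ⟨s, List.mem_toFinset.2 hs, of_decide_eq_true hps⟩
  calc onesCount L = (greedyStarts L).card := (card_greedyStarts L).symm
    _ ≤ F.toFinset.card := Finset.card_le_card_of_forall_subsingleton (· ∈ ·) hcover
        fun s hs => by
          obtain ⟨i, hi⟩ := (hFsupp s (List.mem_toFinset.1 hs)).exists_subset_pair
          exact subsingleton_greedyStarts_of_subset_pair hi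
    _ ≤ F.length := List.toFinset_card_le F

/-- The number of non-overlapping `11` substrings plus remaining ones of `δ` is a lower
bound on the number of fault vectors in any decomposition of `δ`. -/
theorem onesCount_le_faults (m : ℕ) (L : List Bool) (hm : L.length = m)
    (F : List (Finset ℕ)) (hFsupp : ∀ s ∈ F, IsFaultSupp m s)
    (hFsum : ∀ p, (if L.getD p false = true then (1 : ZMod 2) else 0)
        = (F.countP (fun s => decide (p ∈ s)) : ℕ)) :
    onesCount L ≤ F.length :=
  onesCount_le_faults_general m L F hFsupp hFsum
end

section
/- Let p_{T,1} = C(r₁L, t+1)^{-1/t} and p_{T,2} = C(r₂L, t+1)^{-1/t} with integers r₁ ≥ r₂ ≥ 1, L ≥ 1, and t ≥ 1 with r₂L > t. Then p_{T,2} ≥ p_{T,1} · (r₁/r₂)^{1 + 1/t}, as an inequality of positive real numbers. -/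
/-! Taking the `t`-th root, the claim is `(r₁/r₂)^(t+1) · C(r₂L, t+1) ≤ C(r₁L, t+1)`.
Writing `C(n, k) = n (n-1) ⋯ (n-k+1) / k!`, this compares the two falling factorials factor by
factor: `(n/m)(m - i) ≤ n - i` for `m ≤ n`, where `n/m = r₁L / r₂L = r₁/r₂`. -/

open Finset

namespace Nat

theorem pow_mul_descFactorial_le {m n : ℕ} (hmn : m ≤ n) (k : ℕ) :
    n ^ k * m.descFactorial k ≤ m ^ k * n.descFactorial k := by
  rw [descFactorial_eq_prod_range, descFactorial_eq_prod_range, pow_eq_prod_const,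
    pow_eq_prod_const, ← prod_mul_distrib, ← prod_mul_distrib]
  refine prod_le_prod' fun i _ => ?_
  rw [Nat.mul_sub, Nat.mul_sub, Nat.mul_comm n m]
  exact Nat.sub_le_sub_left (Nat.mul_le_mul_right i hmn) _

theorem pow_mul_choose_le {m n : ℕ} (hmn : m ≤ n) (k : ℕ) :
    n ^ k * m.choose k ≤ m ^ k * n.choose k := by
  have h := pow_mul_descFactorial_le hmn k
  rw [descFactorial_eq_factorial_mul_choose, descFactorial_eq_factorial_mul_choose,
    mul_left_comm (n ^ k), mul_left_comm (m ^ k)] at h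
  exact Nat.le_of_mul_le_mul_left h k.factorial_pos

theorem div_pow_mul_choose_le {m n : ℕ} (hm : 0 < m) (hmn : m ≤ n) (k : ℕ) :
    ((n : ℝ) / m) ^ k * m.choose k ≤ n.choose k := by
  rw [div_pow, div_mul_eq_mul_div, div_le_iff₀ (by positivity), mul_comm (n.choose k : ℝ)]
  exact_mod_cast pow_mul_choose_le hmn k

end Nat

namespace Real

theorem rpow_neg_inv_mul_rpow_le {A B x t : ℝ} (hA : 0 < A) (hB : 0 < B) (hx : 0 ≤ x)
    (ht : 0 < t) (h : x ^ (t + 1) * B ≤ A) :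
    A ^ (-(1 / t)) * x ^ (1 + 1 / t) ≤ B ^ (-(1 / t)) := by
  have hroot : x ^ (1 + 1 / t) * B ^ (1 / t) ≤ A ^ (1 / t) := by
    have hexp : (t + 1) * (1 / t) = 1 + 1 / t := by field_simp
    calc x ^ (1 + 1 / t) * B ^ (1 / t) = (x ^ (t + 1) * B) ^ (1 / t) := by
          rw [mul_rpow (by positivity) hB.le, ← rpow_mul hx, hexp]
      _ ≤ A ^ (1 / t) := rpow_le_rpow (by positivity) h (by positivity)
  have hA' : 0 < A ^ (1 / t) := rpow_pos_of_pos hA _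
  have hB' : 0 < B ^ (1 / t) := rpow_pos_of_pos hB _
  rw [rpow_neg hA.le, rpow_neg hB.le, inv_mul_le_iff₀ hA', ← div_eq_mul_inv,
    le_div_iff₀ hB']
  exact hroot

end Real

theorem threshold_improvement_general (r₁ r₂ L t : ℕ) (hr : r₂ ≤ r₁)
    (ht : 1 ≤ t) (htL : t < r₂ * L) :
    (((r₁ * L).choose (t + 1) : ℝ)) ^ (-(1 / (t : ℝ)))
        * ((r₁ : ℝ) / (r₂ : ℝ)) ^ ((1 : ℝ) + 1 / (t : ℝ))
      ≤ (((r₂ * L).choose (t + 1) : ℝ)) ^ (-(1 / (t : ℝ))) := by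
  have hm : 0 < r₂ * L := by omega
  have hmn : r₂ * L ≤ r₁ * L := Nat.mul_le_mul_right L hr
  have hL₀ : (L : ℝ) ≠ 0 := by exact_mod_cast right_ne_zero_of_mul hm.ne'
  have hratio : (r₁ : ℝ) / r₂ = ((r₁ * L : ℕ) : ℝ) / ((r₂ * L : ℕ) : ℝ) := by
    push_cast
    rw [mul_div_mul_right _ _ hL₀]
  refine Real.rpow_neg_inv_mul_rpow_le (by exact_mod_cast Nat.choose_pos (by omega))
    (by exact_mod_cast Nat.choose_pos htL) (by positivity) (by exact_mod_cast ht) ?_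
  rw [← Nat.cast_add_one, Real.rpow_natCast, hratio]
  exact Nat.div_pow_mul_choose_le hm hmn (t + 1)

/-- Threshold comparison: with `p_{T,i} = C(rᵢL, t+1)^{-1/t}` and `r₁ ≥ r₂`, one has
`p_{T,2} ≥ p_{T,1} · (r₁/r₂)^{1 + 1/t}`. -/
theorem threshold_improvement (r₁ r₂ L t : ℕ) (hr : r₂ ≤ r₁) (hr₂ : 1 ≤ r₂)
    (hL : 1 ≤ L) (ht : 1 ≤ t) (htL : t < r₂ * L) :
    (((r₁ * L).choose (t + 1) : ℝ)) ^ (-(1 / (t : ℝ)))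
        * ((r₁ : ℝ) / (r₂ : ℝ)) ^ ((1 : ℝ) + 1 / (t : ℝ))
      ≤ (((r₂ * L).choose (t + 1) : ℝ)) ^ (-(1 / (t : ℝ))) :=
  threshold_improvement_general r₁ r₂ L t hr ht htL
end

section
/- Fix t = 1 and m = 2. There is no decoding function D : 𝔽₂ → {1, 2} (from the single-bit difference vector to a round index) such that for every single fault among I(1), I(2), II(1), II(2), the declared round D(δ) is a correct round, where for fault I(i) a round j is correct iff j ≠ i, and for fault II(i) every round is correct. In particular, 2 rounds of syndrome measurement are insufficient for the strongly 1-fault-tolerant adaptive protocol, while 3 rounds suffice. -/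
/-- Difference vector (1 bit, 2 rounds) of a Type-I fault in round `i ∈ {1,2}`:
both `I(1)` and `I(2)` flip the single difference bit. -/
def diffI2 (_ : ℕ) : Bool := true

/-- Difference vector (2 bits, 3 rounds) of a Type-I fault in round `i ∈ {1,2,3}`. -/
def diffI3 (i : ℕ) : Bool × Bool := (decide (i ≤ 2), decide (2 ≤ i))

theorem not_exists_correct_decoder_of_diff_one_eq_two {α : Type*} {diff : ℕ → α}
    (hdiff : diff 1 = diff 2) :
    ¬ ∃ D : α → ℕ, (∀ δ, D δ = 1 ∨ D δ = 2) ∧ ∀ i, 1 ≤ i → i ≤ 2 → D (diff i) ≠ i := by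
  rintro ⟨D, hrange, hcorrect⟩
  rcases hrange (diff 1) with h1 | h2
  · exact hcorrect 1 le_rfl one_le_two h1
  · exact hcorrect 2 one_le_two le_rfl (hdiff ▸ h2)

/-- The second bit is set exactly when the fault occurred in round 2 or later, so that round 1
is correct; otherwise the fault occurred in round 1 and round 3 is correct. -/
def threeRoundDecoder (δ : Bool × Bool) : ℕ := if δ.2 then 1 else 3

theorem one_le_threeRoundDecoder_and_le_three (δ : Bool × Bool) :
    1 ≤ threeRoundDecoder δ ∧ threeRoundDecoder δ ≤ 3 := by
  unfold threeRoundDecoder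
  split_ifs <;> omega

theorem threeRoundDecoder_diffI3_ne (i : ℕ) : threeRoundDecoder (diffI3 i) ≠ i := by
  simp only [threeRoundDecoder, diffI3, decide_eq_true_eq]
  split_ifs <;> omega

/-- Two rounds are insufficient for the `t = 1` strong adaptive decoder: no decoding
function from the single-bit difference vector to a round index is correct for every
single fault (for `I(i)` a round `j` is correct iff `j ≠ i`; `II` faults impose no
constraint) — while three rounds suffice. -/
theorem two_rounds_insufficient :
    (¬ ∃ D : Bool → ℕ, (∀ δ, D δ = 1 ∨ D δ = 2) ∧
        ∀ i, 1 ≤ i → i ≤ 2 → D (diffI2 i) ≠ i) ∧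
    (∃ D : Bool × Bool → ℕ, (∀ δ, 1 ≤ D δ ∧ D δ ≤ 3) ∧
        ∀ i, 1 ≤ i → i ≤ 3 → D (diffI3 i) ≠ i) :=
  ⟨not_exists_correct_decoder_of_diff_one_eq_two rfl,
    threeRoundDecoder, one_le_threeRoundDecoder_and_le_three,
    fun i _ _ => threeRoundDecoder_diffI3_ne i⟩
end
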